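/- arXiv:2105.10825 — 3 statements merged into one kernel-verified Lean document; each statement's English description precedes it below -/
import Mathlib

section
/- Let ψ : ℝ → ℝ be an even integrable function with ∫_ℝ ψ(t) dt = 0, and let F(u) = ∫_{−∞}^{u} ψ(t) dt (so F equals the convolution of the step function 1_{[0,∞)} with ψ). Assume F ∈ L²(ℝ). Then for all γ, γ' ∈ {−1, +1}, ∫_ℝ σ(γ F(t)) σ(γ' F(t)) dt = ∫_ℝ σ(−γ F(t)) σ(−γ' F(t)) dt; that is, an even wavelet cannot distinguish the step function from its negative via ReLU correlations. -/
/-! Evenness and zero mean of `ψ` make its primitive `F` odd, and the reflection `t ↦ -t`,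
which preserves Lebesgue measure, then trades `F` for `-F` inside any integral. -/

open MeasureTheory Set

section

variable {ψ : ℝ → ℝ}

theorem setIntegral_Iic_neg_eq_setIntegral_Ioi_of_even (heven : ∀ t, ψ (-t) = ψ t) (u : ℝ) :
    ∫ t in Iic (-u), ψ t = ∫ t in Ioi u, ψ t := by
  rw [← neg_neg u, ← integral_comp_neg_Iic, neg_neg]
  exact setIntegral_congr_fun measurableSet_Iic fun t _ => (heven t).symm

theorem setIntegral_Iic_neg_eq_neg_of_even (heven : ∀ t, ψ (-t) = ψ t) (hint : Integrable ψ)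
    (hzero : ∫ t, ψ t = 0) (u : ℝ) :
    ∫ t in Iic (-u), ψ t = -∫ t in Iic u, ψ t := by
  have hsplit : (∫ t in Iic u, ψ t) + ∫ t in Ioi u, ψ t = ∫ t, ψ t :=
    intervalIntegral.integral_Iic_add_Ioi hint.integrableOn hint.integrableOn
  rw [setIntegral_Iic_neg_eq_setIntegral_Ioi_of_even heven]
  linarith

end

theorem integral_comp_eq_integral_comp_neg_of_odd {α E : Type*} [Neg α] [NormedAddCommGroup E]
    [NormedSpace ℝ E] {F : ℝ → α} (hodd : ∀ u, F (-u) = -F u) (f : α → E) :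
    ∫ t, f (F t) = ∫ t, f (-F t) := by
  simp_rw [← hodd]
  exact (integral_neg_eq_self (fun t => f (F t)) volume).symm

theorem even_wavelet_step_relu_correlation_sign_invariant_general
    (ψ : ℝ → ℝ) (heven : ∀ t : ℝ, ψ (-t) = ψ t)
    (hint : Integrable ψ) (hzero : (∫ t : ℝ, ψ t) = 0)
    (F : ℝ → ℝ) (hF : ∀ u : ℝ, F u = ∫ t in Set.Iic u, ψ t) :
    ∀ γ ∈ ({-1, 1} : Set ℝ), ∀ γ' ∈ ({-1, 1} : Set ℝ),
      (∫ t : ℝ, max 0 (γ * F t) * max 0 (γ' * F t))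
        = ∫ t : ℝ, max 0 (-γ * F t) * max 0 (-γ' * F t) := by
  have hodd : ∀ u, F (-u) = -F u := fun u => by
    simp only [hF, setIntegral_Iic_neg_eq_neg_of_even heven hint hzero]
  intro γ _ γ' _
  simpa only [mul_neg, neg_mul] using
    integral_comp_eq_integral_comp_neg_of_odd hodd fun x => max 0 (γ * x) * max 0 (γ' * x)

/-- An even integrable zero-mean wavelet cannot distinguish the step function
from its negative via ReLU correlations: with `F u = ∫_{-∞}^u ψ`, the ReLU
correlations of `F` are invariant under `(γ, γ') ↦ (-γ, -γ')`. -/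
theorem even_wavelet_step_relu_correlation_sign_invariant
    (ψ : ℝ → ℝ) (heven : ∀ t : ℝ, ψ (-t) = ψ t)
    (hint : Integrable ψ) (hzero : (∫ t : ℝ, ψ t) = 0)
    (F : ℝ → ℝ) (hF : ∀ u : ℝ, F u = ∫ t in Set.Iic u, ψ t)
    (hL2 : MemLp F 2 (volume : Measure ℝ)) :
    ∀ γ ∈ ({-1, 1} : Set ℝ), ∀ γ' ∈ ({-1, 1} : Set ℝ),
      (∫ t : ℝ, max 0 (γ * F t) * max 0 (γ' * F t))
        = ∫ t : ℝ, max 0 (-γ * F t) * max 0 (-γ' * F t) :=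
  even_wavelet_step_relu_correlation_sign_invariant_general ψ heven hint hzero F hF
end

section
/- Let G : [0,∞) → [0,∞) be antitone (nonincreasing), ξ ∈ ℝ², and J ∈ ℕ. For 0 ≤ j < J define a_j(ω) = G(‖2^{j}ω − ξ‖) − G(‖2^{j}ω + ξ‖). Then for every ω ∈ ℝ², Σ_{j=0}^{J−1} a_j(ω)² ≤ (Σ_{j=0}^{J−1} a_j(ω))². Equivalently, since the dilated odd Gabor wavelet ψ_j with window ĝ(ω) = G(‖ω‖) has Fourier transform ψ̂_j(ω) = (ĝ(2^{j}ω − ξ) − ĝ(2^{j}ω + ξ))/(2i), one has Σ_j |ψ̂_j(ω)|² ≤ |Σ_j ψ̂_j(ω)|². -/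
open scoped RealInnerProductSpace

lemma norm_sub_le_norm_add_of_inner_nonneg {v ξ : EuclideanSpace ℝ (Fin 2)}
    (h : 0 ≤ ⟪v, ξ⟫) : ‖v - ξ‖ ≤ ‖v + ξ‖ := by
  rw [← pow_le_pow_iff_left₀ (norm_nonneg _) (norm_nonneg _) (two_ne_zero)]
  rw [norm_sub_sq_real, norm_add_sq_real]
  linarith

/-- For a nonincreasing radial profile `G : [0,∞) → [0,∞)` and
`a_j(ω) = G(‖2ʲω − ξ‖) − G(‖2ʲω + ξ‖)`, the sum of squares over dyadic scales
is dominated by the square of the sum: `Σ_j a_j(ω)² ≤ (Σ_j a_j(ω))²`. -/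
theorem dyadic_gabor_sum_sq_le_sq_sum
    (G : ℝ → ℝ) (hmono : AntitoneOn G (Set.Ici 0))
    (hGnonneg : ∀ t ∈ Set.Ici (0 : ℝ), 0 ≤ G t)
    (ξ : EuclideanSpace ℝ (Fin 2)) (J : ℕ) :
    ∀ ω : EuclideanSpace ℝ (Fin 2),
      (∑ j ∈ Finset.range J,
          (G ‖((2 : ℝ) ^ j) • ω - ξ‖ - G ‖((2 : ℝ) ^ j) • ω + ξ‖) ^ 2)
        ≤ (∑ j ∈ Finset.range J,
            (G ‖((2 : ℝ) ^ j) • ω - ξ‖ - G ‖((2 : ℝ) ^ j) • ω + ξ‖)) ^ 2 := by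
  intro ω
  rcases le_or_gt 0 (⟪ω, ξ⟫) with h | h
  · -- all terms nonnegative
    apply Finset.sum_sq_le_sq_sum_of_nonneg
    intro j _
    have hinner : 0 ≤ ⟪((2 : ℝ) ^ j) • ω, ξ⟫ := by
      rw [real_inner_smul_left]
      positivity
    have hle := norm_sub_le_norm_add_of_inner_nonneg hinner
    have := hmono (Set.mem_Ici.2 (norm_nonneg _)) (Set.mem_Ici.2 (norm_nonneg _)) hle
    linarith
  · -- all terms nonpositive; negate
    have key : ∀ j ∈ Finset.range J,
        0 ≤ -(G ‖((2 : ℝ) ^ j) • ω - ξ‖ - G ‖((2 : ℝ) ^ j) • ω + ξ‖) := by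
      intro j _
      have hinner : 0 ≤ ⟪((2 : ℝ) ^ j) • ω, -ξ⟫ := by
        rw [inner_neg_right, real_inner_smul_left]
        nlinarith [pow_pos (zero_lt_two (α := ℝ)) j]
      have hle := norm_sub_le_norm_add_of_inner_nonneg hinner
      rw [sub_neg_eq_add, ← sub_eq_add_neg] at hle
      have := hmono (Set.mem_Ici.2 (norm_nonneg _)) (Set.mem_Ici.2 (norm_nonneg _)) hle
      linarith
    calc (∑ j ∈ Finset.range J,
          (G ‖((2 : ℝ) ^ j) • ω - ξ‖ - G ‖((2 : ℝ) ^ j) • ω + ξ‖) ^ 2)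
        = ∑ j ∈ Finset.range J,
          (-(G ‖((2 : ℝ) ^ j) • ω - ξ‖ - G ‖((2 : ℝ) ^ j) • ω + ξ‖)) ^ 2 := by
          exact Finset.sum_congr rfl fun j _ => (neg_sq _).symm
      _ ≤ (∑ j ∈ Finset.range J,
          -(G ‖((2 : ℝ) ^ j) • ω - ξ‖ - G ‖((2 : ℝ) ^ j) • ω + ξ‖)) ^ 2 :=
          Finset.sum_sq_le_sq_sum_of_nonneg key
      _ = (∑ j ∈ Finset.range J,
          (G ‖((2 : ℝ) ^ j) • ω - ξ‖ - G ‖((2 : ℝ) ^ j) • ω + ξ‖)) ^ 2 := by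
          rw [Finset.sum_neg_distrib, neg_sq]
end

section
/- Let g ∈ L¹(ℝ²) with Fourier transform 𝓕g(ω) = G(‖ω‖), where G : [0,∞) → [0,∞) is antitone (nonincreasing). Let Ξ ⊂ ℝ² be a finite set of central frequencies and J ∈ ℕ. For 0 ≤ j < J and ζ ∈ Ξ define the dilated odd Gabor wavelets ψ_{j,ζ}(u) = 2^{−2j} g(2^{−j}u) sin(⟨ζ, 2^{−j}u⟩). Let φ, h ∈ L¹(ℝ²) and assume the lower frame bound: for every ω ∈ ℝ², |𝓕φ(ω)|² + |𝓕h(ω)|² + Σ_{j<J, ζ∈Ξ} |𝓕ψ_{j,ζ}(ω)|² > 0. If x, y ∈ L¹(ℝ²) satisfy x ∗ φ = y ∗ φ, x ∗ h = y ∗ h, and x ∗ (Σ_{j<J} ψ_{j,ζ}) = y ∗ (Σ_{j<J} ψ_{j,ζ}) almost everywhere for every ζ ∈ Ξ, then x = y almost everywhere. That is, summing the odd Gabor wavelets over dyadic scales preserves invertibility of the filter bank. -/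
/-!
By the convolution theorem, `x ∗ k = y ∗ k` gives `𝓕x = 𝓕y` wherever `𝓕k ≠ 0`, and by the frame
bound at every `ω` one of `𝓕φ`, `𝓕h`, `𝓕ψ_{j,ζ}` is nonzero. Only the wavelets need care, since
they enter through their sum over scales:
`2i 𝓕(∑_j ψ_{j,ζ})(ω) = ∑_j (G ‖2^j ω - ζ‖ - G ‖2^j ω + ζ‖)`.
As `‖cω - ζ‖ ≤ ‖cω + ζ‖` exactly when `c⟪ω, ζ⟫ ≥ 0` and `G` is antitone, all the terms of this sum
have the sign of `⟪ω, ζ⟫`, so it vanishes only if every term does. Hence `𝓕x = 𝓕y` everywhere,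
and the Fourier transform is injective on `L¹`.
-/

open MeasureTheory
open scoped RealInnerProductSpace

/-- The Fourier transform on `ℝ²` with convention `𝓕f(ω) = ∫ f(u) e^{−i⟨u,ω⟩} du`. -/
noncomputable def fourier2 (f : EuclideanSpace ℝ (Fin 2) → ℝ)
    (ω : EuclideanSpace ℝ (Fin 2)) : ℂ :=
  ∫ u : EuclideanSpace ℝ (Fin 2), (f u : ℂ) * Complex.exp (-Complex.I * (⟪u, ω⟫ : ℂ))

/-- Convolution on `ℝ²`: `(f ∗ g)(u) = ∫ f(u−t) g(t) dt`. -/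
noncomputable def conv2 (f g : EuclideanSpace ℝ (Fin 2) → ℝ)
    (u : EuclideanSpace ℝ (Fin 2)) : ℝ :=
  ∫ t : EuclideanSpace ℝ (Fin 2), f (u - t) * g t

open FourierTransform Complex Convolution

section FourierInjective

variable {V F : Type*} [NormedAddCommGroup V] [InnerProductSpace ℝ V] [FiniteDimensional ℝ V]
  [MeasurableSpace V] [BorelSpace V] [NormedAddCommGroup F] [NormedSpace ℂ F] [CompleteSpace F]

theorem MeasureTheory.Integrable.ae_eq_zero_of_fourier_eq_zero {f : V → F} (hf : Integrable f)
    (h : 𝓕 f = 0) : f =ᵐ[volume] 0 := by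
  refine ae_eq_zero_of_integral_contDiff_smul_eq_zero hf.locallyIntegrable fun g hg hgc => ?_
  have hgc' : HasCompactSupport (Complex.ofRealCLM ∘ g) := hgc.comp_left rfl
  set φ : SchwartzMap V ℂ := 𝓕⁻ (hgc'.toSchwartzMap (by fun_prop))
  calc ∫ x, g x • f x = ∫ x, 𝓕 (φ : V → ℂ) x • f x := by
        congr 1 with x
        rw [← SchwartzMap.fourier_coe, FourierTransform.fourier_fourierInv_eq]
        simp [Complex.coe_smul]
    _ = ∫ x, φ x • 𝓕 f x := by
        have := VectorFourier.integral_fourierIntegral_smul_eq_flip (L := innerₗ V)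
          (μ := volume) (ν := volume) Real.continuous_fourierChar continuous_inner φ.integrable hf
        rwa [flip_innerₗ] at this
    _ = 0 := by simp [h]

end FourierInjective

theorem norm_smul_sub_le_norm_smul_add {V : Type*} [NormedAddCommGroup V] [InnerProductSpace ℝ V]
    {c : ℝ} (hc : 0 ≤ c) {ω ζ : V} (h : 0 ≤ ⟪ω, ζ⟫) : ‖c • ω - ζ‖ ≤ ‖c • ω + ζ‖ := by
  rw [← sq_le_sq₀ (norm_nonneg _) (norm_nonneg _), norm_sub_sq_real, norm_add_sq_real,
    real_inner_smul_left]
  nlinarith [mul_nonneg hc h]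

theorem AntitoneOn.eq_of_sum_sub_norm_smul_eq_zero {V : Type*} [NormedAddCommGroup V]
    [InnerProductSpace ℝ V] {G : ℝ → ℝ} (hG : AntitoneOn G (Set.Ici 0)) {ι : Type*}
    {s : Finset ι} {c : ι → ℝ} (hc : ∀ i ∈ s, 0 ≤ c i) {ω ζ : V}
    (hsum : ∑ i ∈ s, (G ‖c i • ω - ζ‖ - G ‖c i • ω + ζ‖) = 0) :
    ∀ i ∈ s, G ‖c i • ω - ζ‖ = G ‖c i • ω + ζ‖ := by
  have hle : ∀ ζ' : V, 0 ≤ ⟪ω, ζ'⟫ → ∀ i ∈ s, G ‖c i • ω + ζ'‖ ≤ G ‖c i • ω - ζ'‖ :=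
    fun ζ' h i hi => hG (norm_nonneg _) (norm_nonneg _)
      (norm_smul_sub_le_norm_smul_add (hc i hi) h)
  rcases le_total 0 ⟪ω, ζ⟫ with h | h
  · intro i hi
    exact sub_eq_zero.1 <|
      (Finset.sum_eq_zero_iff_of_nonneg fun i hi => sub_nonneg.2 (hle ζ h i hi)).1 hsum i hi
  · have hζ : 0 ≤ ⟪ω, -ζ⟫ := by rwa [inner_neg_right, neg_nonneg]
    intro i hi
    refine sub_eq_zero.1 <| (Finset.sum_eq_zero_iff_of_nonpos fun i hi => ?_).1 hsum i hi
    simpa [sub_eq_add_neg] using hle (-ζ) hζ i hi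

local notation "ℝ²" => EuclideanSpace ℝ (Fin 2)

theorem fourier2_eq_fourier (f : ℝ² → ℝ) (ω : ℝ²) :
    fourier2 f ω = 𝓕 (fun u => (f u : ℂ)) ((2 * Real.pi)⁻¹ • ω) := by
  rw [Real.fourier_eq', fourier2]
  congr 1 with u
  rw [smul_eq_mul, mul_comm, real_inner_smul_right]
  congr 2
  push_cast
  field_simp

theorem integrable_fourier2_integrand {f : ℝ² → ℝ} (hf : Integrable f) (ω : ℝ²) :
    Integrable fun u => (f u : ℂ) * exp (-I * (⟪u, ω⟫ : ℂ)) := by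
  refine hf.ofReal.mul_bdd (c := 1) (by fun_prop) (ae_of_all _ fun u => ?_)
  rw [norm_exp]
  simp

theorem fourier2_sum {ι : Type*} (s : Finset ι) {f : ι → ℝ² → ℝ}
    (hf : ∀ i ∈ s, Integrable (f i)) (ω : ℝ²) :
    fourier2 (fun u => ∑ i ∈ s, f i u) ω = ∑ i ∈ s, fourier2 (f i) ω := by
  simp only [fourier2, ofReal_sum, Finset.sum_mul]
  exact integral_finsetSum s fun i hi => integrable_fourier2_integrand (hf i hi) ω

theorem fourier2_sub {f k : ℝ² → ℝ} (hf : Integrable f) (hk : Integrable k) (ω : ℝ²) :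
    fourier2 (fun u => f u - k u) ω = fourier2 f ω - fourier2 k ω := by
  simp only [fourier2, ofReal_sub, sub_mul]
  exact integral_sub (integrable_fourier2_integrand hf ω) (integrable_fourier2_integrand hk ω)

theorem fourier2_comp_inv_smul (f : ℝ² → ℝ) {c : ℝ} (hc : 0 < c) (ω : ℝ²) :
    fourier2 (fun u => (c ^ 2)⁻¹ * f (c⁻¹ • u)) ω = fourier2 f (c • ω) := by
  have hscale := Measure.integral_comp_inv_smul_of_nonneg volume
    (fun v : ℝ² => (f v : ℂ) * exp (-I * (⟪v, c • ω⟫ : ℂ))) hc.le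
  rw [finrank_euclideanSpace_fin] at hscale
  calc fourier2 (fun u => (c ^ 2)⁻¹ * f (c⁻¹ • u)) ω
      = (c ^ 2)⁻¹ • ∫ u : ℝ², (f (c⁻¹ • u) : ℂ) * exp (-I * (⟪c⁻¹ • u, c • ω⟫ : ℂ)) := by
        rw [fourier2, ← integral_smul]
        congr 1 with u
        rw [real_inner_smul_left, real_inner_smul_right, ← mul_assoc, inv_mul_cancel₀ hc.ne',
          one_mul, Complex.real_smul]
        push_cast
        ring
    _ = fourier2 f (c • ω) := by rw [hscale, inv_smul_smul₀ (by positivity), fourier2]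

theorem fourier2_mul_sin_inner {f : ℝ² → ℝ} (hf : Integrable f) (ζ ω : ℝ²) :
    fourier2 (fun u => f u * Real.sin ⟪ζ, u⟫) ω
      = (fourier2 f (ω - ζ) - fourier2 f (ω + ζ)) / (2 * I) := by
  rw [fourier2, fourier2, fourier2, ← integral_sub (integrable_fourier2_integrand hf _)
    (integrable_fourier2_integrand hf _), ← integral_div]
  congr 1 with u
  have h₁ : exp (-I * (⟪u, ω - ζ⟫ : ℂ)) = exp (⟪ζ, u⟫ * I) * exp (-I * (⟪u, ω⟫ : ℂ)) := by
    rw [← exp_add, inner_sub_right, real_inner_comm ζ]; push_cast; ring_nf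
  have h₂ : exp (-I * (⟪u, ω + ζ⟫ : ℂ)) = exp (-⟪ζ, u⟫ * I) * exp (-I * (⟪u, ω⟫ : ℂ)) := by
    rw [← exp_add, inner_add_right, real_inner_comm ζ]; push_cast; ring_nf
  rw [ofReal_mul, ofReal_sin, sin, h₁, h₂]
  field_simp
  ring_nf
  rw [I_sq]
  ring

theorem fourier2_conv2 {f k : ℝ² → ℝ} (hf : Integrable f) (hk : Integrable k) (ω : ℝ²) :
    fourier2 (conv2 f k) ω = fourier2 f ω * fourier2 k ω := by
  have hconv : (fun u => (conv2 f k u : ℂ))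
      = (fun u => (k u : ℂ)) ⋆[ContinuousLinearMap.mul ℂ ℂ] (fun u => (f u : ℂ)) := by
    funext u
    rw [conv2, convolution_def, ← integral_complex_ofReal]
    congr 1 with t
    push_cast
    simp [mul_comm]
  rw [mul_comm, fourier2_eq_fourier, hconv, fourier2_eq_fourier, fourier2_eq_fourier]
  exact Real.fourier_mul_convolution_eq (R := ℂ) hk.ofReal hf.ofReal _

theorem fourier2_eq_of_conv2_ae_eq {x y k : ℝ² → ℝ} (hx : Integrable x) (hy : Integrable y)
    (hk : Integrable k) (h : ∀ᵐ u, conv2 x k u = conv2 y k u) {ω : ℝ²}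
    (hkω : fourier2 k ω ≠ 0) : fourier2 x ω = fourier2 y ω := by
  refine mul_right_cancel₀ hkω ?_
  rw [← fourier2_conv2 hx hk, ← fourier2_conv2 hy hk, fourier2_eq_fourier, fourier2_eq_fourier]
  exact Real.fourier_congr_ae (by filter_upwards [h] with u hu; rw [hu]) _

theorem ae_eq_of_fourier2_eq {x y : ℝ² → ℝ} (hx : Integrable x) (hy : Integrable y)
    (h : ∀ ω, fourier2 x ω = fourier2 y ω) : x =ᵐ[volume] y := by
  have hdiff : (fun u => ((x u - y u : ℝ) : ℂ)) =ᵐ[volume] 0 := by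
    refine (hx.sub hy).ofReal.ae_eq_zero_of_fourier_eq_zero (funext fun w => ?_)
    have hw := fourier2_eq_fourier (fun u => x u - y u) ((2 * Real.pi) • w)
    rw [smul_smul, inv_mul_cancel₀ (by positivity), one_smul, fourier2_sub hx hy, h, sub_self]
      at hw
    exact hw.symm
  filter_upwards [hdiff] with u hu
  simpa [sub_eq_zero] using hu

noncomputable def gaborWavelet (g : ℝ² → ℝ) (j : ℕ) (ζ u : ℝ²) : ℝ :=
  ((2 : ℝ) ^ (2 * j))⁻¹ * g (((2 : ℝ) ^ j)⁻¹ • u) * Real.sin ⟪ζ, ((2 : ℝ) ^ j)⁻¹ • u⟫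

theorem gaborWavelet_eq_dilation (g : ℝ² → ℝ) (j : ℕ) (ζ : ℝ²) :
    gaborWavelet g j ζ
      = fun u =>
          (((2 : ℝ) ^ j) ^ 2)⁻¹ * (fun v => g v * Real.sin ⟪ζ, v⟫) (((2 : ℝ) ^ j)⁻¹ • u) := by
  funext u
  rw [gaborWavelet, pow_mul', mul_assoc]

theorem integrable_gaborWavelet {g : ℝ² → ℝ} (hg : Integrable g) (j : ℕ) (ζ : ℝ²) :
    Integrable (gaborWavelet g j ζ) := by
  have hmod : Integrable fun v => g v * Real.sin ⟪ζ, v⟫ :=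
    hg.mul_bdd (c := 1) (by fun_prop) (ae_of_all _ fun v => by simpa using Real.abs_sin_le_one _)
  rw [gaborWavelet_eq_dilation]
  exact (hmod.comp_smul (by positivity)).const_mul _

theorem fourier2_gaborWavelet {g : ℝ² → ℝ} (hg : Integrable g) (j : ℕ) (ζ ω : ℝ²) :
    fourier2 (gaborWavelet g j ζ) ω
      = (fourier2 g ((2 : ℝ) ^ j • ω - ζ) - fourier2 g ((2 : ℝ) ^ j • ω + ζ)) / (2 * I) := by
  rw [gaborWavelet_eq_dilation,
    fourier2_comp_inv_smul (fun v => g v * Real.sin ⟪ζ, v⟫) (by positivity),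
    fourier2_mul_sin_inner hg]

theorem fourier2_sum_gaborWavelet_ne_zero {G : ℝ → ℝ} (hG : AntitoneOn G (Set.Ici 0))
    {g : ℝ² → ℝ} (hg : Integrable g) (hFg : ∀ ω, fourier2 g ω = (G ‖ω‖ : ℂ)) {s : Finset ℕ}
    {j₀ : ℕ} (hj₀ : j₀ ∈ s) {ζ ω : ℝ²} (h : fourier2 (gaborWavelet g j₀ ζ) ω ≠ 0) :
    fourier2 (fun u => ∑ j ∈ s, gaborWavelet g j ζ u) ω ≠ 0 := by
  have hψ : ∀ j, fourier2 (gaborWavelet g j ζ) ω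
      = ((G ‖(2 : ℝ) ^ j • ω - ζ‖ - G ‖(2 : ℝ) ^ j • ω + ζ‖ : ℝ) : ℂ) / (2 * I) := by
    intro j
    rw [fourier2_gaborWavelet hg, hFg, hFg, ofReal_sub]
  rw [fourier2_sum s fun j _ => integrable_gaborWavelet hg j ζ,
    Finset.sum_congr rfl fun j _ => hψ j, ← Finset.sum_div, ← ofReal_sum]
  intro hsum
  have hsum' := (div_eq_zero_iff.1 hsum).resolve_right (by simp)
  have hG₀ := hG.eq_of_sum_sub_norm_smul_eq_zero (c := fun j => (2 : ℝ) ^ j)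
    (fun j _ => by positivity) (by exact_mod_cast hsum') j₀ hj₀
  exact h (by rw [hψ, hG₀, sub_self, ofReal_zero, zero_div])

theorem summed_gabor_filter_bank_injective_general
    (G : ℝ → ℝ) (hmono : AntitoneOn G (Set.Ici 0))
    (g : EuclideanSpace ℝ (Fin 2) → ℝ) (hg : Integrable g)
    (hFg : ∀ ω : EuclideanSpace ℝ (Fin 2), fourier2 g ω = (G ‖ω‖ : ℂ))
    (Ξ : Finset (EuclideanSpace ℝ (Fin 2))) (J : ℕ)
    (ψ : ℕ → EuclideanSpace ℝ (Fin 2) → EuclideanSpace ℝ (Fin 2) → ℝ)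
    (hψ : ∀ j ζ u, ψ j ζ u
      = ((2 : ℝ) ^ (2 * j))⁻¹ * g (((2 : ℝ) ^ j)⁻¹ • u)
          * Real.sin ⟪ζ, ((2 : ℝ) ^ j)⁻¹ • u⟫)
    (φ hfil : EuclideanSpace ℝ (Fin 2) → ℝ)
    (hφ : Integrable φ) (hh : Integrable hfil)
    (hframe : ∀ ω : EuclideanSpace ℝ (Fin 2),
      0 < ‖fourier2 φ ω‖ ^ 2 + ‖fourier2 hfil ω‖ ^ 2
            + ∑ j ∈ Finset.range J, ∑ ζ ∈ Ξ, ‖fourier2 (ψ j ζ) ω‖ ^ 2)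
    (x y : EuclideanSpace ℝ (Fin 2) → ℝ)
    (hx : Integrable x) (hy : Integrable y)
    (heqφ : ∀ᵐ u : EuclideanSpace ℝ (Fin 2), conv2 x φ u = conv2 y φ u)
    (heqh : ∀ᵐ u : EuclideanSpace ℝ (Fin 2), conv2 x hfil u = conv2 y hfil u)
    (heqψ : ∀ ζ ∈ Ξ, ∀ᵐ u : EuclideanSpace ℝ (Fin 2),
      conv2 x (fun v => ∑ j ∈ Finset.range J, ψ j ζ v) u
        = conv2 y (fun v => ∑ j ∈ Finset.range J, ψ j ζ v) u) :
    ∀ᵐ u : EuclideanSpace ℝ (Fin 2), x u = y u := by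
  obtain rfl : ψ = gaborWavelet g := funext fun j => funext fun ζ => funext (hψ j ζ)
  refine ae_eq_of_fourier2_eq hx hy fun ω => ?_
  obtain hφω | hhω | ⟨j, hj, ζ, hζ, hψω⟩ : fourier2 φ ω ≠ 0 ∨ fourier2 hfil ω ≠ 0 ∨
      ∃ j ∈ Finset.range J, ∃ ζ ∈ Ξ, fourier2 (gaborWavelet g j ζ) ω ≠ 0 := by
    by_contra! ⟨hφω, hhω, hψω⟩
    have hpos := hframe ω
    rw [hφω, hhω, Finset.sum_eq_zero fun j hj => Finset.sum_eq_zero fun ζ hζ => by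
      rw [hψω j hj ζ hζ, norm_zero, zero_pow two_ne_zero]] at hpos
    simp at hpos
  · exact fourier2_eq_of_conv2_ae_eq hx hy hφ heqφ hφω
  · exact fourier2_eq_of_conv2_ae_eq hx hy hh heqh hhω
  · exact fourier2_eq_of_conv2_ae_eq hx hy
      (integrable_finsetSum _ fun j _ => integrable_gaborWavelet hg j ζ) (heqψ ζ hζ)
      (fourier2_sum_gaborWavelet_ne_zero hmono hg hFg hj hψω)

/-- Summing the odd directional Gabor wavelets over dyadic scales preserves
invertibility of the filter bank `{φ, h, ψ_{j,ζ}}`. -/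
theorem summed_gabor_filter_bank_injective
    (G : ℝ → ℝ) (hmono : AntitoneOn G (Set.Ici 0))
    (hGnonneg : ∀ t ∈ Set.Ici (0 : ℝ), 0 ≤ G t)
    (g : EuclideanSpace ℝ (Fin 2) → ℝ) (hg : Integrable g)
    (hFg : ∀ ω : EuclideanSpace ℝ (Fin 2), fourier2 g ω = (G ‖ω‖ : ℂ))
    (Ξ : Finset (EuclideanSpace ℝ (Fin 2))) (J : ℕ)
    (ψ : ℕ → EuclideanSpace ℝ (Fin 2) → EuclideanSpace ℝ (Fin 2) → ℝ)
    (hψ : ∀ j ζ u, ψ j ζ u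
      = ((2 : ℝ) ^ (2 * j))⁻¹ * g (((2 : ℝ) ^ j)⁻¹ • u)
          * Real.sin ⟪ζ, ((2 : ℝ) ^ j)⁻¹ • u⟫)
    (φ hfil : EuclideanSpace ℝ (Fin 2) → ℝ)
    (hφ : Integrable φ) (hh : Integrable hfil)
    (hframe : ∀ ω : EuclideanSpace ℝ (Fin 2),
      0 < ‖fourier2 φ ω‖ ^ 2 + ‖fourier2 hfil ω‖ ^ 2
            + ∑ j ∈ Finset.range J, ∑ ζ ∈ Ξ, ‖fourier2 (ψ j ζ) ω‖ ^ 2)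
    (x y : EuclideanSpace ℝ (Fin 2) → ℝ)
    (hx : Integrable x) (hy : Integrable y)
    (heqφ : ∀ᵐ u : EuclideanSpace ℝ (Fin 2), conv2 x φ u = conv2 y φ u)
    (heqh : ∀ᵐ u : EuclideanSpace ℝ (Fin 2), conv2 x hfil u = conv2 y hfil u)
    (heqψ : ∀ ζ ∈ Ξ, ∀ᵐ u : EuclideanSpace ℝ (Fin 2),
      conv2 x (fun v => ∑ j ∈ Finset.range J, ψ j ζ v) u
        = conv2 y (fun v => ∑ j ∈ Finset.range J, ψ j ζ v) u) :
    ∀ᵐ u : EuclideanSpace ℝ (Fin 2), x u = y u :=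
  summed_gabor_filter_bank_injective_general G hmono g hg hFg Ξ J ψ hψ φ hfil hφ hh hframe x y hx hy
    heqφ heqh heqψ
end
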